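/- For the Markov ambiguity set with independent types, the optimal value of the distributionally robust mechanism design problem equals max_i μ̲_i: the Dirac distribution at μ̲ has independent marginals and lies in the ambiguity set, bounding the value from above, and the constant allocation to i* ∈ argmax_i μ̲_i attains it. -/

import Mathlib

/-! The Dirac measure at `μ̲` lies in the ambiguity set and makes the coordinates trivially
independent, so the worst-case payoff of any mechanism is at most its payoff at `μ̲`. By
feasibility that payoff is at most `∑ᵢ pᵢ μ̲ᵢ ≤ maxᵢ μ̲ᵢ`. Conversely,
always allocating to `i*` without payment earns `E[t̃_{i*}] ≥ μ̲_{i*}` under every distribution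
of the ambiguity set, with equality at the Dirac measure. -/

open MeasureTheory

/-- The type space: every coordinate lies in `[tlo i, thi i]`. -/
def InT {ι : Type*} (tlo thi : ι → ℝ) (t : ι → ℝ) : Prop :=
  ∀ i, t i ∈ Set.Icc (tlo i) (thi i)

/-- Membership in the Markov ambiguity set: a probability distribution supported on the
type space whose marginal means lie in `[mlo i, mhi i]`. -/
def InP {ι : Type*} [Fintype ι] (tlo thi mlo mhi : ι → ℝ) (P : Measure (ι → ℝ)) : Prop :=
  IsProbabilityMeasure P ∧ (∀ᵐ t ∂P, InT tlo thi t) ∧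
    ∀ i, ∫ t, t i ∂P ∈ Set.Icc (mlo i) (mhi i)

/-- The principal's payoff in scenario `t`. -/
def Pay {ι : Type*} [Fintype ι] (c : ι → ℝ) (p q : (ι → ℝ) → ι → ℝ) (t : ι → ℝ) : ℝ :=
  ∑ i, (p t i * t i - q t i * c i)

/-- Feasibility: values in `[0,1]`, `q ≤ p`, and total allocation at most one, on the type space. -/
def Feas {ι : Type*} [Fintype ι] (tlo thi : ι → ℝ) (p q : (ι → ℝ) → ι → ℝ) : Prop :=
  ∀ t, InT tlo thi t →
    (∀ i, 0 ≤ q t i ∧ q t i ≤ p t i ∧ p t i ≤ 1) ∧ ∑ i, p t i ≤ 1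

/-- Incentive compatibility: no agent gains by misreporting his type. -/
def IC {ι : Type*} [DecidableEq ι] (tlo thi : ι → ℝ) (p q : (ι → ℝ) → ι → ℝ) : Prop :=
  ∀ i, ∀ t, InT tlo thi t → ∀ s ∈ Set.Icc (tlo i) (thi i),
    p (Function.update t i s) i - q (Function.update t i s) i ≤ p t i

/-- The coordinates `t̃_1, …, t̃_I` are mutually independent under `P`. -/
def IndepCoords {ι : Type*} [Fintype ι] (P : MeasureTheory.Measure (ι → ℝ)) : Prop :=
  ProbabilityTheory.iIndepFun (fun i (t : ι → ℝ) => t i) P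

open ProbabilityTheory

theorem ProbabilityTheory.iIndepFun_dirac {Ω ι : Type*} [MeasurableSpace Ω] {β : ι → Type*}
    [∀ i, MeasurableSpace (β i)] {f : ∀ i, Ω → β i} (hf : ∀ i, Measurable (f i)) (ω : Ω) :
    iIndepFun f (Measure.dirac ω) := by
  refine iIndepFun_iff_measure_inter_preimage_eq_mul.2 fun S sets hsets => ?_
  have hpre : ∀ i ∈ S, MeasurableSet (f i ⁻¹' sets i) := fun i hi => hf i (hsets i hi)
  rw [Measure.dirac_apply' _ (S.measurableSet_biInter hpre),
    Finset.prod_congr rfl fun i hi => Measure.dirac_apply' _ (hpre i hi),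
    prod_indicator_const_apply, one_pow]

theorem Real.sInf_le_of_mem_of_le_of_nonneg {s : Set ℝ} {a b : ℝ} (ha : a ∈ s) (hab : a ≤ b)
    (hb : 0 ≤ b) : sInf s ≤ b := by
  by_cases hs : BddBelow s
  · exact (csInf_le hs ha).trans hab
  · rwa [Real.sInf_of_not_bddBelow hs]

section

variable {ι : Type*} [Fintype ι] {tlo thi mlo mhi : ι → ℝ}

def robustValues (tlo thi mlo mhi c : ι → ℝ) (p q : (ι → ℝ) → ι → ℝ) : Set ℝ :=
  {x | ∃ P : Measure (ι → ℝ), InP tlo thi mlo mhi P ∧ IndepCoords P ∧ x = ∫ t, Pay c p q t ∂P}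

theorem inP_dirac {m : ι → ℝ} (hm : InT tlo thi m) (hmean : ∀ i, m i ∈ Set.Icc (mlo i) (mhi i)) :
    InP tlo thi mlo mhi (Measure.dirac m) :=
  ⟨inferInstance, by rw [ae_dirac_eq]; exact hm, by simpa [integral_dirac]⟩

theorem indepCoords_dirac (m : ι → ℝ) : IndepCoords (Measure.dirac m) :=
  iIndepFun_dirac measurable_pi_apply m

theorem pay_le_of_feas {c : ι → ℝ} {p q : (ι → ℝ) → ι → ℝ} {t : ι → ℝ} {M : ℝ}
    (hF : Feas tlo thi p q) (ht : InT tlo thi t) (hc : ∀ i, 0 ≤ c i) (htM : ∀ i, t i ≤ M)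
    (hM : 0 ≤ M) : Pay c p q t ≤ M := by
  obtain ⟨hbox, hsum⟩ := hF t ht
  have hp : ∀ i, 0 ≤ p t i := fun i => (hbox i).1.trans (hbox i).2.1
  calc Pay c p q t ≤ ∑ i, p t i * t i :=
        Finset.sum_le_sum fun i _ => sub_le_self _ (mul_nonneg (hbox i).1 (hc i))
    _ ≤ ∑ i, p t i * M := Finset.sum_le_sum fun i _ => mul_le_mul_of_nonneg_left (htM i) (hp i)
    _ = (∑ i, p t i) * M := (Finset.sum_mul ..).symm
    _ ≤ M := mul_le_of_le_one_left hM hsum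

theorem sInf_robustValues_le_of_feas {c : ι → ℝ} {p q : (ι → ℝ) → ι → ℝ} {m : ι → ℝ} {M : ℝ}
    (hm : InT tlo thi m) (hmean : ∀ i, m i ∈ Set.Icc (mlo i) (mhi i)) (hF : Feas tlo thi p q)
    (hc : ∀ i, 0 ≤ c i) (hmM : ∀ i, m i ≤ M) (hM : 0 ≤ M) :
    sInf (robustValues tlo thi mlo mhi c p q) ≤ M :=
  Real.sInf_le_of_mem_of_le_of_nonneg
    ⟨_, inP_dirac hm hmean, indepCoords_dirac m, (integral_dirac _ _).symm⟩
    (pay_le_of_feas hF hm hc hmM hM) hM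

theorem pay_allocate_to [DecidableEq ι] (c : ι → ℝ) (j : ι) (t : ι → ℝ) :
    Pay c (fun _ i => if i = j then 1 else 0) (fun _ _ => 0) t = t j := by
  simp [Pay]

theorem sInf_robustValues_allocate_to [DecidableEq ι] (c : ι → ℝ) {j : ι} {m : ι → ℝ}
    (hm : InT tlo thi m) (hmean : ∀ i, m i ∈ Set.Icc (mlo i) (mhi i)) (hj : m j = mlo j) :
    sInf (robustValues tlo thi mlo mhi c (fun _ i => if i = j then 1 else 0) (fun _ _ => 0)) =
      mlo j := by
  refine IsLeast.csInf_eq ⟨⟨_, inP_dirac hm hmean, indepCoords_dirac m, ?_⟩, ?_⟩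
  · simp [pay_allocate_to, integral_dirac, hj]
  · rintro _ ⟨P, hP, -, rfl⟩
    simpa only [pay_allocate_to] using (hP.2.2 j).1

end

/-- For the Markov ambiguity set with independent types, the optimal
value of the distributionally robust mechanism design problem equals `max_i μ̲_i`: the
Dirac distribution at `μ̲` has independent coordinates and lies in the ambiguity set,
every feasible incentive-compatible mechanism has worst-case expected payoff at most
`max_i μ̲_i`, and the constant allocation to `i* ∈ argmax_i μ̲_i` attains this value. -/
theorem stmt_16 {ι : Type*} [Fintype ι] [Nonempty ι] [DecidableEq ι]
    (tlo thi mlo mhi c : ι → ℝ)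
    (h0 : ∀ i, 0 ≤ tlo i) (h1 : ∀ i, tlo i < mlo i) (h2 : ∀ i, mlo i ≤ mhi i)
    (h3 : ∀ i, mhi i < thi i) (hc : ∀ i, 0 < c i)
    (istar : ι) (hstar : ∀ i, mlo i ≤ mlo istar) :
    (InP tlo thi mlo mhi (Measure.dirac mlo) ∧ IndepCoords (Measure.dirac mlo)) ∧
    (∀ p q : (ι → ℝ) → ι → ℝ,
      (∀ i, Measurable fun t => p t i) → (∀ i, Measurable fun t => q t i) →
      Feas tlo thi p q → IC tlo thi p q →
      sInf {x : ℝ | ∃ P : Measure (ι → ℝ), InP tlo thi mlo mhi P ∧ IndepCoords P ∧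
          x = ∫ t, Pay c p q t ∂P} ≤
        Finset.univ.sup' Finset.univ_nonempty mlo) ∧
    sInf {x : ℝ | ∃ P : Measure (ι → ℝ), InP tlo thi mlo mhi P ∧ IndepCoords P ∧
        x = ∫ t, Pay c (fun _ i => if i = istar then 1 else 0) (fun _ _ => 0) t ∂P} =
      Finset.univ.sup' Finset.univ_nonempty mlo := by
  have hmax : Finset.univ.sup' Finset.univ_nonempty mlo = mlo istar :=
    le_antisymm (Finset.sup'_le _ _ fun i _ => hstar i) (Finset.le_sup' _ (Finset.mem_univ _))
  have hT : InT tlo thi mlo := fun i => ⟨(h1 i).le, ((h2 i).trans_lt (h3 i)).le⟩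
  have hmean : ∀ i, mlo i ∈ Set.Icc (mlo i) (mhi i) := fun i => ⟨le_rfl, h2 i⟩
  have hmax_nonneg : 0 ≤ mlo istar := (h0 istar).trans (h1 istar).le
  rw [hmax]
  exact ⟨⟨inP_dirac hT hmean, indepCoords_dirac mlo⟩,
    fun _ _ _ _ hF _ =>
      sInf_robustValues_le_of_feas hT hmean hF (fun i => (hc i).le) hstar hmax_nonneg,
    sInf_robustValues_allocate_to c hT hmean rfl⟩
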